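/- Characterization of PIIF under a proto-metric: let d be a proto-metric on D. A probabilistic allocation π is PIIF with respect to total variation distance and d (i.e., for every ordered pair of doctors (i,j) there exists a distribution p on H with D_TV(p, π(j)) ≤ d(i,j) and π(i) ⪰_i p) if and only if for every two doctors i, j with d(i,j) = 0, the prospect of i stochastically dominates the prospect of j with respect to ≻_i. -/

import Mathlib

/-! Within a cluster the metric is 0, and TV distance 0 forces the witness `p` to be `π(j)` itself.
Across clusters the metric is 1, which any two distributions satisfy, so `p = π(i)` is a witness. -/

open Finset

/-- A probabilistic allocation: a finitely supported probability distribution over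
matchings (bijections between doctors `D` and hospitals `H`). -/
def IsAlloc {D H : Type*} [Fintype D] [Fintype H] [DecidableEq D] [DecidableEq H]
    (π : (D ≃ H) → ℝ) : Prop :=
  (∀ m, 0 ≤ π m) ∧ (∑ m : D ≃ H, π m) = 1

/-- The prospect of doctor `i` under the allocation `π`: the probability that `i`
is matched to hospital `h`. -/
def prospect {D H : Type*} [Fintype D] [Fintype H] [DecidableEq D] [DecidableEq H]
    (π : (D ≃ H) → ℝ) (i : D) (h : H) : ℝ :=
  ∑ m : D ≃ H, if m i = h then π m else 0

/-- `p` is a probability distribution on `H`. -/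
def IsDist {H : Type*} [Fintype H] (p : H → ℝ) : Prop :=
  (∀ h, 0 ≤ p h) ∧ (∑ h : H, p h) = 1

/-- Total variation distance between two distributions on `H`. -/
noncomputable def TV {H : Type*} [Fintype H] (p q : H → ℝ) : ℝ :=
  (1 / 2) * ∑ h : H, |p h - q h|

/-- `p` stochastically dominates `q` with respect to the strict preference relation
`pref` (where `pref x y` means `x` is strictly preferred to `y`): for every `h`, the
probability of an outcome at least as good as `h` under `p` is at least that under `q`. -/
def SDom {H : Type*} [Fintype H] (pref : H → H → Prop) (p q : H → ℝ) : Prop :=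
  ∀ h : H,
    (∑ h' : H, Set.indicator {x : H | pref x h ∨ x = h} q h') ≤
      ∑ h' : H, Set.indicator {x : H | pref x h ∨ x = h} p h'

/-- Preference-informed individual fairness with respect to a (pseudo)metric `d`,
total variation distance, and the doctors' strict preferences `pref`. -/
def PIIF {D H : Type*} [Fintype D] [Fintype H] [DecidableEq D] [DecidableEq H]
    (d : D → D → ℝ) (pref : D → H → H → Prop) (π : (D ≃ H) → ℝ) : Prop :=
  ∀ i j : D, ∃ p : H → ℝ,
    IsDist p ∧ TV p (prospect π j) ≤ d i j ∧ SDom (pref i) (prospect π i) p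

/-- PIIF with respect to the proto-metric induced by the cluster map `c`: the prospect
of every doctor stochastically dominates the prospect of every doctor in its cluster. -/
def ClusterPIIF {D H K : Type*} [Fintype D] [Fintype H] [DecidableEq D] [DecidableEq H]
    (c : D → K) (pref : D → H → H → Prop) (π : (D ≃ H) → ℝ) : Prop :=
  ∀ i j : D, c i = c j → SDom (pref i) (prospect π i) (prospect π j)

section Distributions

variable {H : Type*} [Fintype H]

theorem TV_self (p : H → ℝ) : TV p p = 0 := by
  simp [TV]

theorem eq_of_TV_nonpos {p q : H → ℝ} (h : TV p q ≤ 0) : p = q := by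
  have hsum : ∑ x, |p x - q x| = 0 :=
    le_antisymm (by rw [TV] at h; linarith) (sum_nonneg fun _ _ => abs_nonneg _)
  funext x
  have hx := (sum_eq_zero_iff_of_nonneg fun _ _ => abs_nonneg _).1 hsum x (mem_univ x)
  exact sub_eq_zero.1 (abs_eq_zero.1 hx)

theorem TV_le_one {p q : H → ℝ} (hp : IsDist p) (hq : IsDist q) : TV p q ≤ 1 := by
  have hsum : ∑ x, |p x - q x| ≤ 2 :=
    calc ∑ x, |p x - q x| ≤ ∑ x, (p x + q x) := by
          refine sum_le_sum fun x _ => ?_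
          simpa [abs_of_nonneg (hp.1 x), abs_of_nonneg (hq.1 x)] using abs_sub (p x) (q x)
      _ = 2 := by rw [sum_add_distrib, hp.2, hq.2]; norm_num
  rw [TV]
  linarith

theorem SDom.refl (pref : H → H → Prop) (p : H → ℝ) : SDom pref p p :=
  fun _ => le_rfl

end Distributions

theorem IsAlloc.isDist_prospect {D H : Type*} [Fintype D] [Fintype H] [DecidableEq D]
    [DecidableEq H] {π : (D ≃ H) → ℝ} (hπ : IsAlloc π) (i : D) : IsDist (prospect π i) := by
  refine ⟨fun _ => sum_nonneg fun m _ => ?_, ?_⟩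
  · split_ifs
    exacts [hπ.1 m, le_rfl]
  · rw [← hπ.2]
    unfold prospect
    rw [sum_comm]
    simp only [sum_ite_eq, mem_univ, if_true]

theorem piif_iff_cluster_stochastic_domination
    {D H K : Type*} [Fintype D] [Fintype H] [DecidableEq D] [DecidableEq H]
    [DecidableEq K]
    (c : D → K)
    (dpref : D → H → H → Prop)
    (π : (D ≃ H) → ℝ) (hπ : IsAlloc π) :
    PIIF (fun i j => if c i = c j then (0 : ℝ) else 1) dpref π ↔
      (∀ i j : D, c i = c j → SDom (dpref i) (prospect π i) (prospect π j)) := by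
  constructor
  · intro hpiif i j hc
    obtain ⟨p, -, htv, hdom⟩ := hpiif i j
    dsimp only at htv
    rw [if_pos hc] at htv
    rwa [eq_of_TV_nonpos htv] at hdom
  · intro hdom i j
    by_cases hc : c i = c j
    · refine ⟨prospect π j, hπ.isDist_prospect j, ?_, hdom i j hc⟩
      dsimp only
      rw [if_pos hc, TV_self]
    · refine ⟨prospect π i, hπ.isDist_prospect i, ?_, SDom.refl _ _⟩
      dsimp only
      rw [if_neg hc]
      exact TV_le_one (hπ.isDist_prospect i) (hπ.isDist_prospect j)
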